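/- Let R be a commutative ring and f ∈ R((t)) an idempotent (f² = f) whose image in R_red((t)) is 0, where R_red = R/nilradical. Then f = 0. -/

import Mathlib

/-!
The finitely many coefficients of `f` in negative degrees generate a finitely generated ideal
`J` of nilpotent elements, so `J ^ n = 0` for some `n`. Modulo `J`, `f` becomes an idempotent
power series; its order `v ≥ 0` satisfies `2 v ≤ v`, so `v = 0` and its leading coefficient is a
nilpotent idempotent, hence zero. Thus every coefficient of `f` lies in `J`, and then
`f = f ^ (n + 1)` has coefficients in `J ^ (n + 1) = 0`.
-/

namespace HahnSeries

variable {Γ R : Type*} [AddCommMonoid Γ] [LinearOrder Γ] [IsOrderedCancelAddMonoid Γ]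

section NonUnitalNonAssocSemiring

variable [NonUnitalNonAssocSemiring R] {x : R⟦Γ⟧}

theorem order_nonpos_of_isIdempotentElem (hx : IsIdempotentElem x) (hx0 : x ≠ 0) :
    x.order ≤ 0 := by
  have h : x.orderTop + x.orderTop ≤ (x * x).orderTop := orderTop_add_le_mul
  rw [hx.eq, ← order_eq_orderTop_of_ne_zero hx0, ← WithTop.coe_add, WithTop.coe_le_coe] at h
  exact add_le_iff_nonpos_left.mp h

theorem isIdempotentElem_leadingCoeff (hx : IsIdempotentElem x) (hneg : ∀ g < 0, x.coeff g = 0) :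
    IsIdempotentElem x.leadingCoeff := by
  rcases eq_or_ne x 0 with rfl | hx0
  · simp [IsIdempotentElem]
  have hlc : x.coeff x.order ≠ 0 := leadingCoeff_eq (x := x) ▸ leadingCoeff_ne_zero.mpr hx0
  have horder : x.order = 0 :=
    le_antisymm (order_nonpos_of_isIdempotentElem hx hx0) (not_lt.mp fun h ↦ hlc (hneg _ h))
  have h := coeff_mul_order_add_order x x
  rwa [hx.eq, horder, add_zero, ← horder, ← leadingCoeff_eq, eq_comm] at h

end NonUnitalNonAssocSemiring

theorem eq_zero_of_isIdempotentElem_of_isNilpotent_coeff [Semiring R] {x : R⟦Γ⟧}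
    (hx : IsIdempotentElem x) (hnil : ∀ g, IsNilpotent (x.coeff g))
    (hneg : ∀ g < 0, x.coeff g = 0) : x = 0 :=
  leadingCoeff_eq_zero.mp <| (isIdempotentElem_leadingCoeff hx hneg).eq_zero_of_isNilpotent
    (leadingCoeff_eq (x := x) ▸ hnil _)

section CommSemiring

variable [CommSemiring R] {x : R⟦Γ⟧}

theorem coeff_mul_mem_mul {I J : Ideal R} {y : R⟦Γ⟧} (hx : ∀ g, x.coeff g ∈ I)
    (hy : ∀ g, y.coeff g ∈ J) (g : Γ) : (x * y).coeff g ∈ I * J := by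
  rw [coeff_mul]
  exact Ideal.sum_mem _ fun ij _ ↦ Ideal.mul_mem_mul (hx ij.1) (hy ij.2)

theorem coeff_pow_mem_pow {I : Ideal R} (hx : ∀ g, x.coeff g ∈ I) (n : ℕ) (g : Γ) :
    (x ^ n).coeff g ∈ I ^ n := by
  induction n generalizing g with
  | zero => simp
  | succ n ih =>
    rw [pow_succ, pow_succ]
    exact coeff_mul_mem_mul ih hx g

theorem eq_zero_of_isIdempotentElem_of_coeff_mem {I : Ideal R} (hI : IsNilpotent I)
    (hx : IsIdempotentElem x) (hxI : ∀ g, x.coeff g ∈ I) : x = 0 := by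
  obtain ⟨n, hn⟩ := hI
  ext g
  have h := coeff_pow_mem_pow hxI (n + 1) g
  rwa [hx.pow_succ_eq, pow_succ, hn, zero_mul, Submodule.zero_eq_bot, Ideal.mem_bot] at h

end CommSemiring

theorem coeff_mem_of_isIdempotentElem [CommRing R] {x : R⟦Γ⟧} (I : Ideal R)
    (hx : IsIdempotentElem x) (hnil : ∀ g, IsNilpotent (x.coeff g))
    (hneg : ∀ g < 0, x.coeff g ∈ I) (g : Γ) : x.coeff g ∈ I := by
  let π := (Ideal.Quotient.mk I).toNonUnitalRingHom
  have hπ : x.map π = 0 := by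
    refine eq_zero_of_isIdempotentElem_of_isNilpotent_coeff ?_
      (fun g ↦ (hnil g).map (Ideal.Quotient.mk I))
      fun g hg ↦ Ideal.Quotient.eq_zero_iff_mem.mpr (hneg g hg)
    rw [IsIdempotentElem, ← HahnSeries.map_mul, hx.eq]
  exact Ideal.Quotient.eq_zero_iff_mem.mp (congrArg (coeff · g) hπ)

end HahnSeries

open HahnSeries in
theorem idempotent_laurentSeries_eq_zero_of_coeff_nilpotent
    (R : Type*) [CommRing R] (f : LaurentSeries R) (hf : f * f = f)
    (h : ∀ n : ℤ, f.coeff n ∈ nilradical R) :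
    f = 0 := by
  set J : Ideal R := Ideal.span (f.coeff '' Set.Ico f.order 0)
  have hJ : IsNilpotent J :=
    (Ideal.FG.isNilpotent_iff_le_nilradical
      (Submodule.fg_span ((Set.finite_Ico _ _).image _))).mpr <|
      Ideal.span_le.mpr <| by rintro _ ⟨n, -, rfl⟩; exact h n
  have hneg : ∀ n < 0, f.coeff n ∈ J := fun n hn ↦ by
    rcases lt_or_ge n f.order with hlt | hge
    · rw [coeff_eq_zero_of_lt_order hlt]
      exact J.zero_mem
    · exact Ideal.subset_span ⟨n, ⟨hge, hn⟩, rfl⟩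
  exact eq_zero_of_isIdempotentElem_of_coeff_mem hJ hf <|
    coeff_mem_of_isIdempotentElem J hf (fun n ↦ mem_nilradical.mp (h n)) hneg
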